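/- Let N ≥ 1, M the N×N all-ones matrix, and B an N×N matrix with entries in {0,1} with exactly k ones. Then the vector (V, W) with V_j = N − √k and W_j = φ_j(B) − √k (where φ_j(B) is the j-th row sum of B) is an eigenvector of T = [[M, M],[B, M]] with eigenvalue N − √k, provided this vector is nonzero. -/

import Mathlib

/-! Write `s = √k`, so `s² = k`. The all-ones block sums a vector and `B` turns a constant
vector into row sums, so the top block row of `T u` is `N (N - s) + (k - N s) = (N - s)²` and the
bottom one is `(N - s) φ_j + (k - N s) = (N - s)(φ_j - s)`. -/

namespace Matrix

variable {m n R : Type*} [Fintype n]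

theorem ones_mulVec [NonAssocSemiring R] (v : n → R) :
    (of fun (_ : m) (_ : n) => (1 : R)) *ᵥ v = fun _ => ∑ j, v j := by
  ext
  simp [mulVec, dotProduct]

theorem mulVec_const [NonUnitalNonAssocSemiring R] (A : Matrix m n R) (c : R) :
    A *ᵥ (fun _ => c) = fun i => (∑ j, A i j) * c := by
  ext
  simp [mulVec, dotProduct, Finset.sum_mul]

theorem fromBlocks_ones_mulVec_eq_smul [CommRing R] (B : Matrix n n R) (s : R)
    (hs : s * s = ∑ i, ∑ j, B i j) :
    fromBlocks (of fun _ _ => 1) (of fun _ _ => 1) B (of fun _ _ => 1) *ᵥ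
        Sum.elim (fun _ : n => (Fintype.card n : R) - s) (fun j => ∑ i, B j i - s) =
      ((Fintype.card n : R) - s) •
        Sum.elim (fun _ : n => (Fintype.card n : R) - s) (fun j => ∑ i, B j i - s) := by
  ext (j | j) <;>
    simp only [fromBlocks_mulVec, Function.comp_def, Sum.elim_inl, Sum.elim_inr, ones_mulVec,
      mulVec_const, of_apply, mul_one, Pi.add_apply, Pi.smul_apply, smul_eq_mul,
      Finset.sum_sub_distrib, Finset.sum_const, Finset.card_univ, nsmul_eq_mul] <;>
    linear_combination -hs

end Matrix

open Matrix in
theorem stmt2_general (N : ℕ) (k : ℕ)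
    (B : Matrix (Fin N) (Fin N) ℝ)
    (hBk : ∑ i, ∑ j, B i j = (k : ℝ)) :
    let M : Matrix (Fin N) (Fin N) ℝ := fun _ _ => 1
    let T : Matrix (Fin N ⊕ Fin N) (Fin N ⊕ Fin N) ℝ := Matrix.fromBlocks M M B M
    let u : Fin N ⊕ Fin N → ℝ :=
      Sum.elim (fun _ => (N : ℝ) - Real.sqrt k) (fun j => (∑ i, B j i) - Real.sqrt k)
    u ≠ 0 → T.mulVec u = ((N : ℝ) - Real.sqrt k) • u ∧ u ≠ 0 := by
  intro M T u hu
  have hs : √(k : ℝ) * √(k : ℝ) = ∑ i, ∑ j, B i j := by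
    rw [hBk, Real.mul_self_sqrt k.cast_nonneg]
  have hT := fromBlocks_ones_mulVec_eq_smul B _ hs
  rw [Fintype.card_fin] at hT
  exact ⟨hT, hu⟩

open Matrix in
/-- the vector `(V,W)` with `V_j = N - √k`, `W_j = φ_j(B) - √k`,
provided it is nonzero, is an eigenvector of `T = [[M,M],[B,M]]` with eigenvalue `N - √k`. -/
theorem stmt2 (N : ℕ) (hN : 1 ≤ N) (k : ℕ)
    (B : Matrix (Fin N) (Fin N) ℝ)
    (hB01 : ∀ i j, B i j = 0 ∨ B i j = 1)
    (hBk : ∑ i, ∑ j, B i j = (k : ℝ)) :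
    let M : Matrix (Fin N) (Fin N) ℝ := fun _ _ => 1
    let T : Matrix (Fin N ⊕ Fin N) (Fin N ⊕ Fin N) ℝ := Matrix.fromBlocks M M B M
    let u : Fin N ⊕ Fin N → ℝ :=
      Sum.elim (fun _ => (N : ℝ) - Real.sqrt k) (fun j => (∑ i, B j i) - Real.sqrt k)
    u ≠ 0 → T.mulVec u = ((N : ℝ) - Real.sqrt k) • u ∧ u ≠ 0 :=
  stmt2_general N k B hBk
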